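/- Excluded middle for LTL₃: for every formula φ, ⟦φ⟧₃ T = ↯(Σ^ω ∖ ⟦φ⟧₃ F) and ⟦φ⟧₃ F = ↯(Σ^ω ∖ ⟦φ⟧₃ T). In particular the T and F definitive sets are disjoint but are not set complements of one another; rather, each is the set of definitive prefixes of the complement (within Σ^ω) of the other. -/

import Mathlib

/-- A trace is a finite list of states or an infinite stream of states. -/
def Trace (σ : Type) := List σ ⊕ (ℕ → σ)

namespace Trace

variable {σ : Type}

/-- Concatenation of traces; if the first is infinite, the result is the first. -/
def app : Trace σ → Trace σ → Trace σ
  | Sum.inl l, Sum.inl l' => Sum.inl (l ++ l')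
  | Sum.inl l, Sum.inr s =>
      Sum.inr (fun n => if h : n < l.length then l.get ⟨n, h⟩ else s (n - l.length))
  | Sum.inr s, _ => Sum.inr s

instance : Append (Trace σ) := ⟨app⟩

/-- The empty trace ε. -/
def eps : Trace σ := Sum.inl []

/-- A trace is infinite iff it is a stream. -/
def Inf (t : Trace σ) : Prop := t.isRight

/-- Drop the first state of a trace. -/
def drop1 : Trace σ → Trace σ
  | Sum.inl [] => Sum.inl []
  | Sum.inl (_ :: l) => Sum.inl l
  | Sum.inr s => Sum.inr (fun n => s (n + 1))

/-- Drop the first `n` states of a trace. -/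
def drop (t : Trace σ) (n : ℕ) : Trace σ := drop1^[n] t

/-- The first state of a trace, if any. -/
def head? : Trace σ → Option σ
  | Sum.inl [] => none
  | Sum.inl (a :: _) => some a
  | Sum.inr s => some (s 0)

/-- The set of prefixes of a trace. -/
def pre (t : Trace σ) : Set (Trace σ) := {u | ∃ v, t = u ++ v}

/-- The set of prefixes of traces in a set: ↓X. -/
def preS (X : Set (Trace σ)) : Set (Trace σ) := ⋃ t ∈ X, pre t

/-- The set of extensions of a trace: ↑t. -/
def ext (t : Trace σ) : Set (Trace σ) := {u | ∃ v, u = t ++ v}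

/-- The definitive prefixes of a set of traces: ↯X. -/
def dp (X : Set (Trace σ)) : Set (Trace σ) := {t | ext t ⊆ preS X}

/-- A set of traces is definitive iff it equals its own set of definitive prefixes. -/
def Definitive (X : Set (Trace σ)) : Prop := X = dp X

/-- Definitive union ⩁ of a collection of trace sets. -/
def dUnionS (S : Set (Set (Trace σ))) : Set (Trace σ) := dp (⋃₀ S)

/-- Binary / indexed definitive union. -/
def dUnion (X Y : Set (Trace σ)) : Set (Trace σ) := dp (X ∪ Y)

def dUnionI {ι : Sort*} (X : ι → Set (Trace σ)) : Set (Trace σ) := dp (⋃ i, X i)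

/-- The prepend operation ▷X. -/
def prepend (X : Set (Trace σ)) : Set (Trace σ) := {t | t.drop 1 ∈ X}

/-- Σ^ω, the set of infinite traces. -/
def omegaSet (σ : Type) : Set (Trace σ) := {t | t.Inf}

/-- The first state of a trace, with the empty state as default. -/
def st0 {A : Type} (t : Trace (Set A)) : Set A := (t.head?).getD ∅

end Trace

/-- Syntax of LTL formulae over atomic propositions `A`. -/
inductive LTL (A : Type) where
  | top : LTL A
  | atom : A → LTL A
  | neg : LTL A → LTL A
  | and : LTL A → LTL A → LTL A
  | next : LTL A → LTL A
  | until_ : LTL A → LTL A → LTL A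

namespace LTL

variable {A : Type}

open Trace

/-- Conventional LTL satisfaction on (infinite) traces. -/
def Sat : Trace (Set A) → LTL A → Prop
  | t, .top => True
  | t, .atom a => a ∈ t.st0
  | t, .neg φ => ¬ Sat t φ
  | t, .and φ ψ => Sat t φ ∧ Sat t ψ
  | t, .next φ => Sat (t.drop 1) φ
  | t, .until_ φ ψ => ∃ i, Sat (t.drop i) ψ ∧ ∀ j < i, Sat (t.drop j) φ

/-- Answer-indexed family semantics of conventional LTL (sets of infinite traces). -/
def sem : LTL A → Bool → Set (Trace (Set A))
  | .top, true => omegaSet (Set A)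
  | .top, false => ∅
  | .atom a, true => {t | t.Inf ∧ a ∈ t.st0}
  | .atom a, false => {t | t.Inf ∧ a ∉ t.st0}
  | .neg φ, b => sem φ (!b)
  | .and φ ψ, true => sem φ true ∩ sem ψ true
  | .and φ ψ, false => sem φ false ∪ sem ψ false
  | .next φ, b => {t | t.drop 1 ∈ sem φ b}
  | .until_ φ ψ, true => {t | ∃ k, (∀ i < k, t.drop i ∈ sem φ true) ∧ t.drop k ∈ sem ψ true}
  | .until_ φ ψ, false => {t | ∀ k, (∃ i < k, t.drop i ∈ sem φ false) ∨ t.drop k ∈ sem ψ false}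

/-- Answer-indexed family semantics of LTL₃ (definitive sets of finite-or-infinite traces). -/
def sem3 : LTL A → Bool → Set (Trace (Set A))
  | .top, true => Set.univ
  | .top, false => ∅
  | .atom a, true => dp {t | t ≠ eps ∧ a ∈ t.st0}
  | .atom a, false => dp {t | t ≠ eps ∧ a ∉ t.st0}
  | .neg φ, b => sem3 φ (!b)
  | .and φ ψ, true => sem3 φ true ∩ sem3 ψ true
  | .and φ ψ, false => dUnion (sem3 φ false) (sem3 ψ false)
  | .next φ, b => prepend (sem3 φ b)
  | .until_ φ ψ, true =>
      dUnionI (fun k => (fun X => prepend X ∩ sem3 φ true)^[k] (sem3 ψ true))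
  | .until_ φ ψ, false =>
      ⋂ k, (fun X => dUnion (prepend X) (sem3 φ false))^[k] (sem3 ψ false)

end LTL

/-! The LTL₃ answer sets are the definitive prefixes of the classical ones, `⟦φ⟧₃ b = ↯⟦φ⟧ b`,
by induction on `φ`. Every finite trace extends to an infinite one, so `↯X` only depends on the
infinite traces in `X`, and an infinite trace lies in `↯X` iff it lies in `X`; hence `↯` commutes
with `∩`, `⋂` and `▷`, and absorbs inner `↯`s in unions, which is all the inductive clauses need.
Classically `⟦φ⟧ T` and `⟦φ⟧ F` partition `Σ^ω`, which gives both identities and disjointness. -/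

namespace Trace

variable {σ : Type} {t u : Trace σ} {X Y : Set (Trace σ)}

theorem append_def (t u : Trace σ) : t ++ u = app t u := rfl

@[simp] theorem eps_append (t : Trace σ) : eps ++ t = t := by
  rcases t with l | s <;> rfl

@[simp] theorem drop1_eps : drop1 (eps : Trace σ) = eps := rfl

theorem inf_append : Inf (t ++ u) ↔ Inf t ∨ Inf u := by
  rw [append_def]
  rcases t with l | s <;> rcases u with l' | s' <;> simp [app, Inf]

theorem append_of_inf (ht : Inf t) (u : Trace σ) : t ++ u = t := by
  rcases t with l | s
  · simp [Inf] at ht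
  · rcases u <;> rfl

theorem append_assoc (t u v : Trace σ) : t ++ u ++ v = t ++ (u ++ v) := by
  simp only [append_def]
  rcases t with l | s
  · rcases u with l' | s'
    · rcases v with l'' | s''
      · simp only [app, List.append_assoc]
        rfl
      · simp only [app]
        congr 1
        funext n
        by_cases h₁ : n < l.length
        · rw [dif_pos (by simp; omega), dif_pos h₁]
          simp [List.getElem_append_left h₁]
        by_cases h₂ : n < l.length + l'.length
        · rw [dif_pos (by simp; omega), dif_neg h₁, dif_pos (by omega)]
          simp [List.getElem_append_right (Nat.le_of_not_lt h₁)]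
        · rw [dif_neg (by simp; omega), dif_neg h₁, dif_neg (by omega)]
          simp [Nat.sub_add_eq]
    · rcases v <;> rfl
  · rfl

theorem ne_eps_of_inf (ht : Inf t) : t ≠ eps := by
  rintro rfl
  simp [Inf, eps] at ht

theorem inf_drop1 : Inf (drop1 t) ↔ Inf t := by
  rcases t with (_ | ⟨a, l⟩) | s <;> simp [drop1, Inf]

@[simp] theorem inf_drop (n : ℕ) : Inf (t.drop n) ↔ Inf t := by
  induction n generalizing t with
  | zero => rfl
  | succ n ih => rw [drop, Function.iterate_succ_apply, ← drop, ih, inf_drop1]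

@[simp] theorem drop_zero (t : Trace σ) : t.drop 0 = t := rfl

theorem drop_succ (t : Trace σ) (n : ℕ) : t.drop (n + 1) = (drop1 t).drop n :=
  Function.iterate_succ_apply drop1 n t

theorem drop1_append (ht : t ≠ eps) (u : Trace σ) : drop1 (t ++ u) = drop1 t ++ u := by
  rw [append_def, append_def]
  rcases t with (_ | ⟨a, l⟩) | s
  · exact absurd rfl ht
  · rcases u with l' | s'
    · rfl
    · simp only [app, drop1, List.length_cons]
      congr 1
      funext n
      by_cases hn : n < l.length
      · simp [hn]
      · simp [hn, show ¬ n + 1 < l.length + 1 by omega]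
  · rcases u <;> rfl

theorem mem_preS : t ∈ preS X ↔ ∃ x ∈ X, ∃ u, x = t ++ u := by
  simp [preS, pre]

theorem mem_preS_of_inf (ht : Inf t) : t ∈ preS X ↔ t ∈ X := by
  rw [mem_preS]
  constructor
  · rintro ⟨x, hx, v, rfl⟩
    rwa [append_of_inf ht] at hx
  · exact fun hx => ⟨t, hx, eps, (append_of_inf ht eps).symm⟩

theorem mem_dp : t ∈ dp X ↔ ∀ u, t ++ u ∈ preS X := by
  simp [dp, ext, Set.subset_def]

theorem mem_dp_of_inf (ht : Inf t) : t ∈ dp X ↔ t ∈ X := by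
  rw [mem_dp, ← mem_preS_of_inf ht]
  exact ⟨fun h => append_of_inf ht eps ▸ h eps, fun h u => (append_of_inf ht u).symm ▸ h⟩

theorem dp_empty : dp (∅ : Set (Trace σ)) = ∅ :=
  Set.eq_empty_iff_forall_notMem.2 fun t ht => by simpa [preS] using mem_dp.1 ht eps

variable [Nonempty σ]

theorem exists_inf_append (t : Trace σ) : ∃ u, Inf (t ++ u) :=
  ⟨Sum.inr fun _ => Classical.arbitrary σ, inf_append.2 (Or.inr rfl)⟩

theorem mem_dp_iff : t ∈ dp X ↔ ∀ u, Inf (t ++ u) → t ++ u ∈ X := by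
  rw [mem_dp]
  refine ⟨fun h u hu => (mem_preS_of_inf hu).1 (h u), fun h u => ?_⟩
  obtain ⟨w, hw⟩ := exists_inf_append (t ++ u)
  rw [append_assoc] at hw
  have hx := h (u ++ w) hw
  rw [← append_assoc] at hx
  exact mem_preS.2 ⟨_, hx, w, rfl⟩

theorem dp_congr_inf (h : ∀ t, Inf t → (t ∈ X ↔ t ∈ Y)) : dp X = dp Y := by
  ext t
  simp only [mem_dp_iff]
  exact forall_congr' fun u => imp_congr_right fun hu => h _ hu

theorem dp_omegaSet : dp (omegaSet σ) = Set.univ :=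
  Set.eq_univ_of_forall fun _ => mem_dp_iff.2 fun _ hu => hu

theorem dp_inter : dp X ∩ dp Y = dp (X ∩ Y) := by
  ext t
  simp only [Set.mem_inter_iff, mem_dp_iff, ← forall_and]

theorem iInter_dp {ι : Sort*} (X : ι → Set (Trace σ)) : ⋂ i, dp (X i) = dp (⋂ i, X i) := by
  ext t
  simp only [Set.mem_iInter, mem_dp_iff]
  exact forall_comm.trans (forall_congr' fun _ => forall_comm)

theorem dp_union_dp : dp (dp X ∪ dp Y) = dp (X ∪ Y) :=
  dp_congr_inf fun _ ht => by simp only [Set.mem_union, mem_dp_of_inf ht]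

theorem dp_iUnion_dp {ι : Sort*} (X : ι → Set (Trace σ)) :
    dp (⋃ i, dp (X i)) = dp (⋃ i, X i) :=
  dp_congr_inf fun _ ht => by simp only [Set.mem_iUnion, mem_dp_of_inf ht]

theorem prepend_dp : prepend (dp X) = dp (prepend X) := by
  ext t
  simp only [prepend, Set.mem_ofPred_eq, mem_dp_iff]
  change (∀ u, Inf (drop1 t ++ u) → drop1 t ++ u ∈ X) ↔ ∀ u, Inf (t ++ u) → drop1 (t ++ u) ∈ X
  by_cases ht : t = eps
  · subst ht
    simp only [drop1_eps, eps_append]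
    refine ⟨fun h u hu => h _ (inf_drop1.2 hu), fun h u hu => ?_⟩
    rcases u with l | s
    · simp [Inf] at hu
    · exact h (Sum.inr fun n => Nat.casesOn n (Classical.arbitrary σ) s) rfl
  · simp only [drop1_append ht, inf_append, inf_drop1]

theorem disjoint_dp (h : ∀ t, Inf t → t ∈ X → t ∉ Y) : Disjoint (dp X) (dp Y) := by
  refine Set.disjoint_left.2 fun t hX hY => ?_
  obtain ⟨u, hu⟩ := exists_inf_append t
  exact h _ hu (mem_dp_iff.1 hX u hu) (mem_dp_iff.1 hY u hu)

theorem iterate_prepend_inter_dp (P Q : Set (Trace σ)) (k : ℕ) :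
    (fun X => prepend X ∩ dp P)^[k] (dp Q) =
      dp {t | (∀ i < k, t.drop i ∈ P) ∧ t.drop k ∈ Q} := by
  induction k with
  | zero => simp
  | succ k ih =>
    rw [Function.iterate_succ_apply', ih, prepend_dp, dp_inter]
    congr 1
    ext t
    simp only [prepend, Set.mem_inter_iff, Set.mem_ofPred_eq, Nat.forall_lt_succ_left,
      drop_succ, drop_zero]
    tauto

theorem iterate_dUnion_prepend_dp (P Q : Set (Trace σ)) (k : ℕ) :
    (fun X => dUnion (prepend X) (dp P))^[k] (dp Q) =
      dp {t | (∃ i < k, t.drop i ∈ P) ∨ t.drop k ∈ Q} := by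
  induction k with
  | zero => simp
  | succ k ih =>
    rw [Function.iterate_succ_apply', ih, dUnion, prepend_dp, dp_union_dp]
    congr 1
    ext t
    simp only [prepend, Set.mem_union, Set.mem_ofPred_eq, Nat.exists_lt_succ_left, drop_succ,
      drop_zero]
    exact or_comm.trans or_assoc.symm

end Trace

namespace LTL

open Trace

variable {A : Type}

theorem mem_sem_false_iff (φ : LTL A) {t : Trace (Set A)} (ht : t.Inf) :
    t ∈ sem φ false ↔ t ∉ sem φ true := by
  induction φ generalizing t with
  | top => simp [sem, omegaSet, ht]
  | atom a => simp [sem, ht]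
  | neg φ ih => simp [sem, ih ht]
  | and φ ψ ih₁ ih₂ =>
    simp only [sem, Set.mem_union, Set.mem_inter_iff, ih₁ ht, ih₂ ht, not_and_or]
  | next φ ih => exact ih ((inf_drop 1).2 ht)
  | until_ φ ψ ih₁ ih₂ =>
    simp only [sem, Set.mem_ofPred_eq, ih₁ ((inf_drop _).2 ht), ih₂ ((inf_drop _).2 ht),
      not_exists, not_and, or_iff_not_imp_left, not_not]

theorem sem3_eq_dp_sem (φ : LTL A) (b : Bool) : sem3 φ b = dp (sem φ b) := by
  induction φ generalizing b with
  | top => cases b <;> simp [sem3, sem, dp_empty, dp_omegaSet]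
  | atom a =>
    cases b <;>
      exact dp_congr_inf fun t ht => by simp [sem, ht, ne_eps_of_inf ht]
  | neg φ ih => exact ih !b
  | and φ ψ ih₁ ih₂ =>
    cases b
    · simp only [sem3, sem, dUnion, ih₁, ih₂, dp_union_dp]
    · simp only [sem3, sem, ih₁, ih₂, dp_inter]
  | next φ ih => simp only [sem3, ih, prepend_dp]; rfl
  | until_ φ ψ ih₁ ih₂ =>
    cases b
    · simp only [sem3, ih₁, ih₂, iterate_dUnion_prepend_dp, iInter_dp]
      congr 1
      ext t
      simp [sem]
    · simp only [sem3, dUnionI, ih₁, ih₂, iterate_prepend_inter_dp, dp_iUnion_dp]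
      congr 1
      ext t
      simp [sem]

end LTL

theorem sem3_excluded_middle {A : Type} (φ : LTL A) :
    LTL.sem3 φ true = Trace.dp (Trace.omegaSet (Set A) \ LTL.sem3 φ false) ∧
    LTL.sem3 φ false = Trace.dp (Trace.omegaSet (Set A) \ LTL.sem3 φ true) ∧
    Disjoint (LTL.sem3 φ true) (LTL.sem3 φ false) := by
  simp only [LTL.sem3_eq_dp_sem]
  refine ⟨Trace.dp_congr_inf fun t ht => ?_, Trace.dp_congr_inf fun t ht => ?_,
    Trace.disjoint_dp fun t ht hT hF => (LTL.mem_sem_false_iff φ ht).1 hF hT⟩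
  all_goals simp [Trace.omegaSet, ht, Trace.mem_dp_of_inf ht, LTL.mem_sem_false_iff φ ht]
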